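/- The alternating group A_5 does not satisfy the rewriting property P_n for any integer n with 2 ≤ n ≤ 7; that is, for each such n there exists a sequence of n elements x_1, ..., x_n of A_5 such that for every non-identity permutation σ of {1,...,n} one has x_1 x_2 ⋯ x_n ≠ x_{σ(1)} x_{σ(2)} ⋯ x_{σ(n)}. -/

import Mathlib

/-!
A word with pairwise distinct letters is non-rewritable as soon as every rearrangement other than
itself has a different product, because distinct letters make distinct permutations give distinct
rearrangements. For the explicit words of `A₅` below (found by computer search) this is a finite
check over at most `7! = 5040` rearrangements, which the kernel carries out by evaluation.
-/

open Equiv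

def IsNonRewritable {G : Type*} [Monoid G] {n : ℕ} (x : Fin n → G) : Prop :=
  ∀ σ : Perm (Fin n), σ ≠ 1 → (List.ofFn x).prod ≠ (List.ofFn (x ∘ σ)).prod

theorem isNonRewritable_get {G : Type*} [Monoid G] {l : List G} (hl : l.Nodup)
    (h : ∀ l' ∈ l.permutations', l' = l ∨ l'.prod ≠ l.prod) : IsNonRewritable l.get := by
  intro σ hσ hprod
  rw [List.ofFn_get] at hprod
  have hperm : (List.ofFn (l.get ∘ σ)).Perm l := by
    simpa only [List.ofFn_get] using Perm.ofFn_comp_perm σ l.get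
  rcases h _ (List.mem_permutations'.2 hperm) with heq | hne
  · have hfix : l.get ∘ σ = l.get := List.ofFn_injective (heq.trans (List.ofFn_get l).symm)
    exact hσ (Equiv.ext fun i => List.nodup_iff_injective_get.1 hl (congrFun hfix i))
  · exact hne hprod.symm

local notation "A₅" => alternatingGroup (Fin 5)

def evenPerm (g : Perm (Fin 5)) (h : Perm.sign g = 1 := by decide) : A₅ :=
  ⟨g, Perm.mem_alternatingGroup.2 h⟩

def word₂ : List A₅ := [evenPerm c[2, 3, 4], evenPerm (c[1, 2] * c[3, 4])]

def word₃ : List A₅ := word₂ ++ [evenPerm c[2, 4, 3]]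

def word₄ : List A₅ := word₃ ++ [evenPerm (c[0, 1] * c[3, 4])]

def word₅ : List A₅ := word₄ ++ [evenPerm c[1, 2, 4]]

def word₆ : List A₅ :=
  word₄ ++ [evenPerm c[1, 4, 2], evenPerm (c[0, 1] * c[2, 3])]

def word₇ : List A₅ :=
  word₂ ++ [evenPerm c[0, 1, 2, 3, 4], evenPerm c[1, 4, 2], evenPerm (c[0, 2] * c[1, 4]),
    evenPerm c[0, 3, 1], evenPerm c[0, 2, 3, 1, 4]]

theorem isNonRewritable_word₂ : IsNonRewritable word₂.get :=
  isNonRewritable_get (by decide) (by decide +kernel)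

theorem isNonRewritable_word₃ : IsNonRewritable word₃.get :=
  isNonRewritable_get (by decide) (by decide +kernel)

theorem isNonRewritable_word₄ : IsNonRewritable word₄.get :=
  isNonRewritable_get (by decide) (by decide +kernel)

theorem isNonRewritable_word₅ : IsNonRewritable word₅.get :=
  isNonRewritable_get (by decide) (by decide +kernel)

theorem isNonRewritable_word₆ : IsNonRewritable word₆.get :=
  isNonRewritable_get (by decide) (by decide +kernel)

set_option maxRecDepth 10000 in
theorem isNonRewritable_word₇ : IsNonRewritable word₇.get :=
  isNonRewritable_get (by decide) (by decide +kernel)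

/-- For every `n` with `2 ≤ n ≤ 7`, `A₅` has a non-rewritable word of length `n`,
so `A₅` does not satisfy `Pₙ`. -/
theorem A5_not_rewritable_of_le_seven :
    ∀ n : ℕ, 2 ≤ n → n ≤ 7 →
      ∃ x : Fin n → alternatingGroup (Fin 5),
        ∀ σ : Equiv.Perm (Fin n), σ ≠ 1 →
          (List.ofFn x).prod ≠ (List.ofFn (x ∘ σ)).prod := by
  intro n h2 h7
  interval_cases n
  · exact ⟨word₂.get, isNonRewritable_word₂⟩
  · exact ⟨word₃.get, isNonRewritable_word₃⟩
  · exact ⟨word₄.get, isNonRewritable_word₄⟩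
  · exact ⟨word₅.get, isNonRewritable_word₅⟩
  · exact ⟨word₆.get, isNonRewritable_word₆⟩
  · exact ⟨word₇.get, isNonRewritable_word₇⟩
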